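/- Let k ≥ 2. If a position S = (x_1, ..., x_n) satisfies x_3 ≥ 2, β(S) is odd, and (x_1, x_2, x_3) is k-good, then S is a P-position in misère k-Bounded Greedy Nim. -/

import Mathlib

/-- One move in `k`-bounded greedy Nim on a descending-sorted list of heaps:
remove `t` stones with `1 ≤ t ≤ min x₁ k` from a heap with the largest
number of stones `x₁` (the head), and re-sort the result in descending order. -/
def BFollower (k : ℕ) (S S' : List ℕ) : Prop :=
  ∃ t : ℕ, 1 ≤ t ∧ t ≤ min S.headI k ∧
    S' = List.orderedInsert (· ≥ ·) (S.headI - t) S.tail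

/-- One move in greedy Nim: remove any `t` stones with `1 ≤ t ≤ x₁` from a heap
with the largest number of stones `x₁`, and re-sort in descending order. -/
def GFollower (S S' : List ℕ) : Prop :=
  ∃ t : ℕ, 1 ≤ t ∧ t ≤ S.headI ∧
    S' = List.orderedInsert (· ≥ ·) (S.headI - t) S.tail

theorem BFollower.sum_lt {k : ℕ} {S S' : List ℕ} (h : BFollower k S S') :
    S'.sum < S.sum := by
  obtain ⟨t, ht1, ht2, rfl⟩ := h
  have htx : t ≤ S.headI := le_trans ht2 (min_le_left _ _)
  match S with
  | [] => simp [List.headI] at htx; omega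
  | a :: l =>
      have hperm := List.perm_orderedInsert (· ≥ ·) (a - t) l
      have hsum : (List.orderedInsert (· ≥ ·) (a - t) l).sum = (a - t) + l.sum :=
        hperm.sum_eq
      simp only [List.headI, List.tail] at *
      simp [hsum]
      omega

theorem GFollower.sum_lt {S S' : List ℕ} (h : GFollower S S') :
    S'.sum < S.sum := by
  obtain ⟨t, ht1, ht2, rfl⟩ := h
  match S with
  | [] => simp [List.headI] at ht2; omega
  | a :: l =>
      have hperm := List.perm_orderedInsert (· ≥ ·) (a - t) l
      have hsum : (List.orderedInsert (· ≥ ·) (a - t) l).sum = (a - t) + l.sum :=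
        hperm.sum_eq
      simp only [List.headI, List.tail] at *
      simp [hsum]
      omega

/-- `S` is a P-position of `k`-bounded greedy Nim under the normal play
convention: the all-zero position is a P-position (it has no followers), and a
position is a P-position iff every follower is an N-position. -/
def NormalBP (k : ℕ) (S : List ℕ) : Prop :=
  ∀ S', BFollower k S S' → ¬ NormalBP k S'
termination_by S.sum
decreasing_by exact BFollower.sum_lt (by assumption)

/-- `S` is a P-position of `k`-bounded greedy Nim under the misère play
convention: the all-zero position is an N-position, and any other position is a
P-position iff every follower is an N-position. -/
def MisereBP (k : ℕ) (S : List ℕ) : Prop :=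
  S.sum ≠ 0 ∧ ∀ S', BFollower k S S' → ¬ MisereBP k S'
termination_by S.sum
decreasing_by exact BFollower.sum_lt (by assumption)

/-- Normal-play P-positions of greedy Nim. -/
def NormalGP (S : List ℕ) : Prop :=
  ∀ S', GFollower S S' → ¬ NormalGP S'
termination_by S.sum
decreasing_by exact GFollower.sum_lt (by assumption)

/-- Misère-play P-positions of greedy Nim. -/
def MisereGP (S : List ℕ) : Prop :=
  S.sum ≠ 0 ∧ ∀ S', GFollower S S' → ¬ MisereGP S'
termination_by S.sum
decreasing_by exact GFollower.sum_lt (by assumption)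

/-- `R a` is the remainder of `a` modulo `k + 1`. -/
def R (k a : ℕ) : ℕ := a % (k + 1)

/-- The `j`-th heap (1-based) of the position `S`. -/
def heap (S : List ℕ) (j : ℕ) : ℕ := S.getD (j - 1) 0

/-- `β(S)`: `0` if `x₃ = 0`, and `max { j : x_j = x₃ } - 2` otherwise. -/
noncomputable def beta (S : List ℕ) : ℕ :=
  if heap S 3 = 0 then 0
  else sSup {j : ℕ | 1 ≤ j ∧ j ≤ S.length ∧ heap S j = heap S 3} - 2

/-- `α(S)`: `0` if `x₁ = 0`, and `max { j : x_j = x₁ }` otherwise. -/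
noncomputable def alpha (S : List ℕ) : ℕ :=
  if heap S 1 = 0 then 0
  else sSup {j : ℕ | 1 ≤ j ∧ j ≤ S.length ∧ heap S j = heap S 1}

/-- The pair `(x₁, x₂)` (with `x₁ ≥ x₂`) is `k`-nice. -/
def KNice (k x₁ x₂ : ℕ) : Prop :=
  (R k x₁ = 0 ∧ R k x₂ = 1) ∨
  (R k (x₁ - x₂) = 0 ∧ 2 ≤ R k x₂) ∨
  (R k x₁ = 1 ∧ R k x₂ = 0)

/-- The triple `(x₁, x₂, x₃)` (with `x₁ ≥ x₂ ≥ x₃`) is `k`-good. -/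
def KGood (k x₁ x₂ x₃ : ℕ) : Prop :=
  (R k (x₁ - x₂) = k ∧ R k (x₂ - x₃) = 0) ∨
  (R k (x₁ - x₂) = 0 ∧ 1 ≤ R k (x₂ - x₃) ∧ R k (x₂ - x₃) ≤ k - 1) ∨
  (R k (x₁ - x₂) = 1 ∧ R k (x₂ - x₃) = k)


/-- The condition of the main theorem characterizing misère P-positions of
`k`-bounded greedy Nim. -/
noncomputable def MiserePCond (k : ℕ) (S : List ℕ) : Prop :=
  (heap S 3 ≤ 1 ∧ Even (beta S) ∧ KNice k (heap S 1) (heap S 2)) ∨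
  (heap S 3 ≤ 1 ∧ Odd (beta S) ∧ R k (heap S 1 - heap S 2) = 0) ∨
  (2 ≤ heap S 3 ∧ Even (beta S) ∧ R k (heap S 1 - heap S 2) = 0) ∨
  (2 ≤ heap S 3 ∧ Odd (beta S) ∧ KGood k (heap S 1) (heap S 2) (heap S 3))


/-!
The positions satisfying `MiserePCond` (the paper's complete description of the misère
P-positions) form a kernel of the game graph: none of them is terminal, no move leads from one
of them to another, and every other non-terminal position has a move into one of them. For a
sorted position the condition only depends on the three largest heaps and the parity of `β`,
and a move changes these in one of four ways, according to where the reduced largest heap is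
re-inserted; each case is then a computation modulo `k + 1`.
-/

lemma R_lt (k x : ℕ) : R k x < k + 1 := Nat.mod_lt _ k.succ_pos

lemma R_le (k x : ℕ) : R k x ≤ x := Nat.mod_le _ _

lemma R_eq_self {k x : ℕ} (h : x ≤ k) : R k x = x := Nat.mod_eq_of_lt (Nat.lt_succ_of_le h)

lemma R_zero (k : ℕ) : R k 0 = 0 := Nat.zero_mod _

lemma eq_R_or_R_add_le (k x : ℕ) : x = R k x ∨ R k x + (k + 1) ≤ x := by
  have h := Nat.mod_add_div x (k + 1)
  unfold R
  rcases Nat.eq_zero_or_pos (x / (k + 1)) with h0 | h0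
  · left
    rw [h0, Nat.mul_zero] at h
    omega
  · right
    have := Nat.le_mul_of_pos_right (k + 1) h0
    omega

lemma R_add_R_sub {k x y : ℕ} (h : y ≤ x) :
    R k y + R k (x - y) = R k x ∨ R k y + R k (x - y) = R k x + (k + 1) := by
  have hmod : (R k y + R k (x - y)) % (k + 1) = R k x := by
    unfold R
    rw [← Nat.add_mod, Nat.add_sub_cancel' h]
  have := R_lt k y
  have := R_lt k (x - y)
  rcases Nat.lt_or_ge (R k y + R k (x - y)) (k + 1) with hlt | hge
  · rw [Nat.mod_eq_of_lt hlt] at hmod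
    exact Or.inl hmod
  · rw [Nat.mod_eq_sub_mod hge, Nat.mod_eq_of_lt (by omega)] at hmod
    omega

lemma R_sub_add {k x t : ℕ} (htk : t ≤ k) (htx : t ≤ x) :
    R k (x - t) + t = R k x ∨ R k (x - t) + t = R k x + (k + 1) := by
  have := R_add_R_sub (k := k) htx
  rw [R_eq_self htk] at this
  omega

section Sorted

variable {S : List ℕ}

lemma le_getD_iff_lt_countP {c : ℕ} :
    ∀ {l : List ℕ}, l.Pairwise (· ≥ ·) → ∀ {i : ℕ}, i < l.length →
      (c ≤ l.getD i 0 ↔ i < l.countP (c ≤ ·))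
  | [], _, _, hi => by simp at hi
  | x :: xs, hs, i, hi => by
    rw [List.pairwise_cons] at hs
    by_cases hcx : c ≤ x
    · cases i with
      | zero => simp [hcx]
      | succ i =>
        rw [List.getD_cons_succ, le_getD_iff_lt_countP hs.2 (by simpa using hi)]
        simp [hcx]
    · have hlt : ∀ y ∈ x :: xs, y < c := by
        simp only [List.mem_cons, forall_eq_or_imp]
        exact ⟨by omega, fun y hy => by have := hs.1 y hy; omega⟩
      have hzero : (x :: xs).countP (c ≤ ·) = 0 :=
        List.countP_eq_zero.2 fun y hy => by simpa using hlt y hy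
      have hmem : (x :: xs).getD i 0 ∈ x :: xs := by
        rw [List.getD_eq_getElem _ _ hi]
        exact List.getElem_mem hi
      simp only [hzero, Nat.not_lt_zero, iff_false, not_le]
      exact hlt _ hmem

lemma le_heap_iff_le_countP (hs : S.Pairwise (· ≥ ·)) {c j : ℕ} (hj1 : 1 ≤ j)
    (hj : j ≤ S.length) : c ≤ heap S j ↔ j ≤ S.countP (c ≤ ·) := by
  rw [heap, le_getD_iff_lt_countP hs (by omega)]
  omega

lemma heap_le_heap (hs : S.Pairwise (· ≥ ·)) {i j : ℕ} (hi : 1 ≤ i) (hij : i ≤ j)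
    (hj : j ≤ S.length) : heap S j ≤ heap S i := by
  refine (le_heap_iff_le_countP hs hi (by omega)).2 (le_trans hij ?_)
  exact (le_heap_iff_le_countP hs (by omega) hj).1 le_rfl

end Sorted

section Beta

variable {S : List ℕ} {x1 x2 x3 x4 : ℕ} {l : List ℕ}

lemma beta_eq_countP (hs : S.Pairwise (· ≥ ·)) (hlen : 3 ≤ S.length) (h3 : heap S 3 ≠ 0) :
    beta S = S.countP (heap S 3 ≤ ·) - 2 := by
  set q := S.countP (heap S 3 ≤ ·)
  have hq3 : 3 ≤ q := (le_heap_iff_le_countP hs (by omega) hlen).1 le_rfl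
  have hqlen : q ≤ S.length := List.countP_le_length
  have hq : heap S q = heap S 3 :=
    le_antisymm (heap_le_heap hs (by omega) hq3 hqlen)
      ((le_heap_iff_le_countP hs (by omega) hqlen).2 le_rfl)
  have hgreatest : IsGreatest {j | 1 ≤ j ∧ j ≤ S.length ∧ heap S j = heap S 3} q :=
    ⟨⟨by omega, hqlen, hq⟩, fun j ⟨hj1, hjlen, hj⟩ =>
      (le_heap_iff_le_countP hs hj1 hjlen).1 hj.ge⟩
  rw [beta, if_neg h3, hgreatest.csSup_eq]

lemma beta_eq_of_cons_cons {a b : ℕ} {rest : List ℕ}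
    (hs : (x1 :: x2 :: x3 :: rest).Pairwise (· ≥ ·))
    (hs' : (a :: b :: x3 :: rest).Pairwise (· ≥ ·)) (ha : x3 ≤ a) (hb : x3 ≤ b) :
    beta (a :: b :: x3 :: rest) = beta (x1 :: x2 :: x3 :: rest) := by
  by_cases h0 : x3 = 0
  · simp [beta, heap, h0]
  have h1 : x3 ≤ x1 := List.rel_of_pairwise_cons hs (by simp)
  have h2 : x3 ≤ x2 := List.rel_of_pairwise_cons hs.of_cons (by simp)
  rw [beta_eq_countP hs' (by simp) h0, beta_eq_countP hs (by simp) h0]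
  simp [heap, h1, h2, ha, hb]

lemma beta_eq_one_of_lt (hs : (x1 :: x2 :: x3 :: x4 :: l).Pairwise (· ≥ ·)) (h43 : x4 < x3) :
    beta (x1 :: x2 :: x3 :: x4 :: l) = 1 := by
  have h1 : x3 ≤ x1 := List.rel_of_pairwise_cons hs (by simp)
  have h2 : x3 ≤ x2 := List.rel_of_pairwise_cons hs.of_cons (by simp)
  have hl : l.countP (x3 ≤ ·) = 0 := List.countP_eq_zero.2 fun y hy => by
    have := List.rel_of_pairwise_cons hs.of_cons.of_cons.of_cons hy
    simp only [decide_eq_true_eq]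
    omega
  rw [beta_eq_countP hs (by simp) (by simp [heap]; omega)]
  simp [heap, hl, h1, h2, Nat.not_le.2 h43]

lemma beta_eq_succ_of_eq {v : ℕ} {L : List ℕ}
    (hs : (x1 :: x2 :: x3 :: x4 :: l).Pairwise (· ≥ ·))
    (hs' : (x2 :: x3 :: x4 :: L).Pairwise (· ≥ ·)) (hL : L.Perm (v :: l)) (hv : v < x4)
    (h43 : x4 = x3) :
    beta (x1 :: x2 :: x3 :: x4 :: l) = beta (x2 :: x3 :: x4 :: L) + 1 := by
  subst h43
  have h1 : x4 ≤ x1 := List.rel_of_pairwise_cons hs (by simp)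
  have h2 : x4 ≤ x2 := List.rel_of_pairwise_cons hs.of_cons (by simp)
  have hcount : L.countP (x4 ≤ ·) = l.countP (x4 ≤ ·) := by
    rw [hL.countP_eq, List.countP_cons]
    simp; omega
  rw [beta_eq_countP hs (by simp) (by simp [heap]; omega),
    beta_eq_countP hs' (by simp) (by simp [heap]; omega)]
  simp [heap, hcount, h1, h2]

end Beta

-- `MiserePCond` with the parity of `β` as `β % 2`, which `omega` can use.
def PCond (k a b c β : ℕ) : Prop :=
  (c ≤ 1 ∧ β % 2 = 0 ∧ KNice k a b) ∨ (c ≤ 1 ∧ β % 2 = 1 ∧ R k (a - b) = 0) ∨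
  (2 ≤ c ∧ β % 2 = 0 ∧ R k (a - b) = 0) ∨ (2 ≤ c ∧ β % 2 = 1 ∧ KGood k a b c)

lemma miserePCond_cons_iff {k a b c : ℕ} {l : List ℕ} :
    MiserePCond k (a :: b :: c :: l) ↔ PCond k a b c (beta (a :: b :: c :: l)) := by
  unfold MiserePCond PCond
  rw [Nat.even_iff, Nat.odd_iff]
  rfl

section Stability

variable {k x1 x2 x3 t β : ℕ}

/- Given `b`, `c` and `β`, every clause of `PCond k a b c β` determines `R k a`, which a move of
`1 ≤ t ≤ k` stones changes. The same rigidity drives the other cases, named after the position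
where the reduced heap `x1 - t` is re-inserted. -/
lemma PCond.not_of_move_first (ht1 : 1 ≤ t) (htk : t ≤ k)
    (hv : x2 + t ≤ x1) (hc : PCond k x1 x2 x3 β) : ¬ PCond k (x1 - t) x2 x3 β := by
  intro hc'
  unfold PCond KGood KNice at hc hc'
  rw [show x1 - t - x2 = x1 - x2 - t by omega] at hc'
  have := R_sub_add (k := k) htk (show t ≤ x1 - x2 by omega)
  have := R_sub_add (k := k) htk (show t ≤ x1 by omega)
  have := R_add_R_sub (k := k) (show x2 ≤ x1 by omega)
  have := R_lt k (x1 - x2)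
  have := R_lt k (x1 - x2 - t)
  have := R_lt k x1
  have := R_lt k x2
  have := R_lt k (x1 - t)
  have := R_lt k (x2 - x3)
  omega

lemma PCond.not_of_move_second (hk : 2 ≤ k) (h12 : x2 ≤ x1) (htk : t ≤ k) (hv2 : x1 < x2 + t)
    (hv3 : x3 + t ≤ x1) (hc : PCond k x1 x2 x3 β) : ¬ PCond k x2 (x1 - t) x3 β := by
  intro hc'
  unfold PCond KGood KNice at hc hc'
  rw [show x2 - (x1 - t) = t - (x1 - x2) by omega,
      show x1 - t - x3 = x1 - x3 - t by omega] at hc'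
  have := R_eq_self (k := k) (show x1 - x2 ≤ k by omega)
  have := R_eq_self (k := k) (show t - (x1 - x2) ≤ k by omega)
  have := R_sub_add (k := k) htk (show t ≤ x1 - x3 by omega)
  have := R_sub_add (k := k) htk (show t ≤ x1 by omega)
  have h := R_add_R_sub (k := k) (show x2 - x3 ≤ x1 - x3 by omega)
  rw [show x1 - x3 - (x2 - x3) = x1 - x2 by omega] at h
  have := R_add_R_sub (k := k) h12
  have := R_lt k x1
  have := R_lt k x2
  have := R_lt k (x1 - t)
  have := R_lt k (x1 - x3 - t)
  have := R_lt k (x1 - x3)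
  have := R_lt k (x2 - x3)
  omega

lemma PCond.not_of_move_third {β' : ℕ} (hk : 2 ≤ k) (h12 : x2 ≤ x1) (h23 : x3 ≤ x2)
    (ht1 : 1 ≤ t) (htk : t ≤ k) (htx : t ≤ x1) (hv3 : x1 < x3 + t)
    (hβ' : x1 ≤ t → β' % 2 = 0) (hc : PCond k x1 x2 x3 1) :
    ¬ PCond k x2 x3 (x1 - t) β' := by
  intro hc'
  unfold PCond KGood KNice at hc hc'
  rw [show x3 - (x1 - t) = t - (x1 - x3) by omega] at hc'
  have := R_eq_self (k := k) (show x1 - x2 ≤ k by omega)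
  have := R_eq_self (k := k) (show x2 - x3 ≤ k by omega)
  have := R_eq_self (k := k) (show t - (x1 - x3) ≤ k by omega)
  have := R_add_R_sub (k := k) h23
  have := R_add_R_sub (k := k) h12
  have := eq_R_or_R_add_le k x3
  have := R_lt k x1
  have := R_lt k x2
  have := R_lt k x3
  rcases hc with hc | hc | hc | hc <;> rcases hc' with hc' | hc' | hc' | hc' <;> omega

lemma PCond.not_of_move_past_third {x4 β' : ℕ} (hk : 2 ≤ k) (h12 : x2 ≤ x1) (h23 : x3 ≤ x2)
    (h34 : x4 ≤ x3) (ht1 : 1 ≤ t) (htk : t ≤ k) (htx : t ≤ x1) (hv4 : x1 < x4 + t)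
    (hβ : x4 < x3 ∧ β = 1 ∨ x4 = x3 ∧ β = β' + 1) (hc : PCond k x1 x2 x3 β) :
    ¬ PCond k x2 x3 x4 β' := by
  intro hc'
  unfold PCond KGood KNice at hc hc'
  have := R_eq_self (k := k) (show x1 - x2 ≤ k by omega)
  have := R_eq_self (k := k) (show x2 - x3 ≤ k by omega)
  have := R_eq_self (k := k) (show x3 - x4 ≤ k by omega)
  have := R_add_R_sub (k := k) h23
  have := R_add_R_sub (k := k) h12
  have := eq_R_or_R_add_le k x3
  have := R_lt k x1
  have := R_lt k x2
  have := R_lt k x3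
  rcases hc with hc | hc | hc | hc <;> rcases hc' with hc' | hc' | hc' | hc' <;> omega

end Stability

section Moves

variable {k x1 x2 x3 x4 : ℕ} {l : List ℕ}

lemma exists_eq_cons4 {S : List ℕ} (h : 4 ≤ S.length) :
    ∃ x1 x2 x3 x4 l, S = x1 :: x2 :: x3 :: x4 :: l := by
  rcases S with _ | ⟨_, _ | ⟨_, _ | ⟨_, _ | ⟨_, _⟩⟩⟩⟩ <;> simp_all

lemma pairwise_ge_cons4 (hs : (x1 :: x2 :: x3 :: x4 :: l).Pairwise (· ≥ ·)) :
    x2 ≤ x1 ∧ x3 ≤ x2 ∧ x4 ≤ x3 :=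
  ⟨List.rel_of_pairwise_cons hs (by simp), List.rel_of_pairwise_cons hs.of_cons (by simp),
    List.rel_of_pairwise_cons hs.of_cons.of_cons (by simp)⟩

lemma bFollower_cons_iff {T S' : List ℕ} :
    BFollower k (x1 :: T) S' ↔
      ∃ t, 1 ≤ t ∧ t ≤ k ∧ t ≤ x1 ∧
        S' = List.orderedInsert (· ≥ ·) (x1 - t) T := by
  simp only [BFollower, List.headI_cons, List.tail_cons, le_min_iff]
  grind

lemma orderedInsert_eq_first {v : ℕ} {rest : List ℕ} (hv2 : x2 ≤ v) :
    List.orderedInsert (· ≥ ·) v (x2 :: rest) = v :: x2 :: rest := by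
  simp [hv2]

lemma orderedInsert_eq_second {v : ℕ} {rest : List ℕ} (hv2 : v < x2) (hv3 : x3 ≤ v) :
    List.orderedInsert (· ≥ ·) v (x2 :: x3 :: rest) = x2 :: v :: x3 :: rest := by
  simp [Nat.not_le.2 hv2, hv3]

lemma orderedInsert_eq_third {v : ℕ} {rest : List ℕ} (h23 : x3 ≤ x2) (hv3 : v < x3)
    (hv4 : x4 ≤ v) :
    List.orderedInsert (· ≥ ·) v (x2 :: x3 :: x4 :: rest) = x2 :: x3 :: v :: x4 :: rest := by
  simp [Nat.not_le.2 hv3, Nat.not_le.2 (hv3.trans_le h23), hv4]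

lemma orderedInsert_eq_past_third {v : ℕ} {rest : List ℕ} (h23 : x3 ≤ x2) (h34 : x4 ≤ x3)
    (hv4 : v < x4) :
    List.orderedInsert (· ≥ ·) v (x2 :: x3 :: x4 :: rest) =
      x2 :: x3 :: x4 :: List.orderedInsert (· ≥ ·) v rest := by
  simp [Nat.not_le.2 hv4, Nat.not_le.2 (hv4.trans_le h34),
    Nat.not_le.2 ((hv4.trans_le h34).trans_le h23)]

end Moves

theorem MiserePCond.not_of_bFollower {k : ℕ} {S S' : List ℕ} (hk : 2 ≤ k)
    (hs : S.Pairwise (· ≥ ·)) (hlen : 4 ≤ S.length) (hc : MiserePCond k S)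
    (hf : BFollower k S S') : ¬ MiserePCond k S' := by
  obtain ⟨x1, x2, x3, x4, l, rfl⟩ := exists_eq_cons4 hlen
  obtain ⟨t, ht1, htk, htx, rfl⟩ := bFollower_cons_iff.1 hf
  obtain ⟨h12, h23, h34⟩ := pairwise_ge_cons4 hs
  have hs' := hs.of_cons.orderedInsert (x1 - t)
  rw [miserePCond_cons_iff] at hc
  by_cases hv2 : x2 ≤ x1 - t
  · rw [orderedInsert_eq_first hv2] at hs' ⊢
    rw [miserePCond_cons_iff, beta_eq_of_cons_cons hs hs' (by omega) h23]
    exact hc.not_of_move_first ht1 htk (by omega)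
  by_cases hv3 : x3 ≤ x1 - t
  · rw [orderedInsert_eq_second (by omega) hv3] at hs' ⊢
    rw [miserePCond_cons_iff, beta_eq_of_cons_cons hs hs' h23 hv3]
    exact hc.not_of_move_second hk h12 htk (by omega) (by omega)
  by_cases hv4 : x4 ≤ x1 - t
  · rw [orderedInsert_eq_third h23 (by omega) hv4, miserePCond_cons_iff]
    rw [beta_eq_one_of_lt hs (by omega)] at hc
    refine hc.not_of_move_third hk h12 h23 ht1 htk htx (by omega) fun h0 => ?_
    simp [beta, heap, show x1 - t = 0 by omega]
  · rw [orderedInsert_eq_past_third h23 h34 (by omega)] at hs' ⊢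
    rw [miserePCond_cons_iff]
    refine hc.not_of_move_past_third hk h12 h23 h34 ht1 htk htx (by omega) ?_
    rcases h34.lt_or_eq with h43 | h43
    · exact Or.inl ⟨h43, beta_eq_one_of_lt hs h43⟩
    · exact Or.inr
        ⟨h43, beta_eq_succ_of_eq hs hs' (List.perm_orderedInsert _ _ _) (by omega) h43⟩

def MovesToP (k : ℕ) (S : List ℕ) : Prop :=
  ∃ S', BFollower k S S' ∧ MiserePCond k S'

section Reach

variable {k x1 x2 x3 x4 t : ℕ} {l : List ℕ}

lemma movesToP_first (hs : (x1 :: x2 :: x3 :: x4 :: l).Pairwise (· ≥ ·)) (ht1 : 1 ≤ t)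
    (htk : t ≤ k) (hv : x2 + t ≤ x1)
    (h : PCond k (x1 - t) x2 x3 (beta (x1 :: x2 :: x3 :: x4 :: l))) :
    MovesToP k (x1 :: x2 :: x3 :: x4 :: l) := by
  have hv2 : x2 ≤ x1 - t := by omega
  have h23 := (pairwise_ge_cons4 hs).2.1
  have hs' := hs.of_cons.orderedInsert (x1 - t)
  rw [orderedInsert_eq_first hv2] at hs'
  refine ⟨_, bFollower_cons_iff.2 ⟨t, ht1, htk, by omega, rfl⟩, ?_⟩
  rw [orderedInsert_eq_first hv2, miserePCond_cons_iff,
    beta_eq_of_cons_cons hs hs' (by omega) h23]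
  exact h

lemma movesToP_second (hs : (x1 :: x2 :: x3 :: x4 :: l).Pairwise (· ≥ ·)) (ht1 : 1 ≤ t)
    (htk : t ≤ k) (hv2 : x1 < x2 + t) (hv3 : x3 + t ≤ x1)
    (h : PCond k x2 (x1 - t) x3 (beta (x1 :: x2 :: x3 :: x4 :: l))) :
    MovesToP k (x1 :: x2 :: x3 :: x4 :: l) := by
  have hs' := hs.of_cons.orderedInsert (x1 - t)
  rw [orderedInsert_eq_second (by omega) (by omega)] at hs'
  refine ⟨_, bFollower_cons_iff.2 ⟨t, ht1, htk, by omega, rfl⟩, ?_⟩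
  rw [orderedInsert_eq_second (by omega) (by omega), miserePCond_cons_iff,
    beta_eq_of_cons_cons hs hs' (pairwise_ge_cons4 hs).2.1 (by omega)]
  exact h

lemma movesToP_third (hs : (x1 :: x2 :: x3 :: x4 :: l).Pairwise (· ≥ ·)) (ht1 : 1 ≤ t)
    (htk : t ≤ k) (hv3 : x1 < x3 + t) (hv4 : x4 + t ≤ x1)
    (h : ∀ β, PCond k x2 x3 (x1 - t) β) :
    MovesToP k (x1 :: x2 :: x3 :: x4 :: l) := by
  refine ⟨_, bFollower_cons_iff.2 ⟨t, ht1, htk, by omega, rfl⟩, ?_⟩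
  rw [orderedInsert_eq_third (pairwise_ge_cons4 hs).2.1 (by omega) (by omega),
    miserePCond_cons_iff]
  exact h _

lemma movesToP_past_third (hs : (x1 :: x2 :: x3 :: x4 :: l).Pairwise (· ≥ ·)) (ht1 : 1 ≤ t)
    (htk : t ≤ k) (htx : t ≤ x1) (hv4 : x1 < x4 + t) (h43 : x4 = x3)
    (h : ∀ β, beta (x1 :: x2 :: x3 :: x4 :: l) = β + 1 → PCond k x2 x3 x3 β) :
    MovesToP k (x1 :: x2 :: x3 :: x4 :: l) := by
  subst h43
  obtain ⟨-, h23, h34⟩ := pairwise_ge_cons4 hs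
  have hs' := hs.of_cons.orderedInsert (x1 - t)
  rw [orderedInsert_eq_past_third h23 h34 (by omega)] at hs'
  refine ⟨_, bFollower_cons_iff.2 ⟨t, ht1, htk, htx, rfl⟩, ?_⟩
  rw [orderedInsert_eq_past_third h23 h34 (by omega), miserePCond_cons_iff]
  exact h _ (beta_eq_succ_of_eq hs hs' (List.perm_orderedInsert _ _ _) (by omega) rfl)

variable (hs : (x1 :: x2 :: x3 :: x4 :: l).Pairwise (· ≥ ·))
include hs

lemma movesToP_of_R_sub (hk : 2 ≤ k)
    (hc : ¬ PCond k x1 x2 x3 (beta (x1 :: x2 :: x3 :: x4 :: l)))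
    (hA : x3 ≤ 1 ∧ (beta (x1 :: x2 :: x3 :: x4 :: l) % 2 = 1 ∨ 2 ≤ R k x2) ∨
      2 ≤ x3 ∧ (beta (x1 :: x2 :: x3 :: x4 :: l) % 2 = 0 ∨
        1 ≤ R k (x2 - x3) ∧ R k (x2 - x3) ≤ k - 1)) :
    MovesToP k (x1 :: x2 :: x3 :: x4 :: l) := by
  have hp : R k (x1 - x2) ≠ 0 := fun hp => hc (by unfold PCond KNice KGood; omega)
  have hpk := R_lt k (x1 - x2)
  have hpx := R_le k (x1 - x2)
  refine movesToP_first hs (t := R k (x1 - x2)) (by omega) (by omega) (by omega) ?_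
  have hp' : R k (x1 - R k (x1 - x2) - x2) = 0 := by
    rw [show x1 - R k (x1 - x2) - x2 = x1 - x2 - R k (x1 - x2) by omega]
    have := R_sub_add (k := k) (by omega) hpx
    have := R_lt k (x1 - x2 - R k (x1 - x2))
    omega
  unfold PCond KNice KGood
  omega

lemma movesToP_of_R_eq_zero (hk : 2 ≤ k) (hx1 : 1 ≤ x1)
    (hc : ¬ PCond k x1 x2 x3 (beta (x1 :: x2 :: x3 :: x4 :: l))) (h3 : x3 ≤ 1)
    (hβ : beta (x1 :: x2 :: x3 :: x4 :: l) % 2 = 0) (hR2 : R k x2 = 0) :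
    MovesToP k (x1 :: x2 :: x3 :: x4 :: l) := by
  obtain ⟨h12, h23, -⟩ := pairwise_ge_cons4 hs
  have hR1 : R k x1 ≠ 1 := fun h => hc (Or.inl ⟨h3, hβ, Or.inr (Or.inr ⟨h, hR2⟩)⟩)
  have := R_add_R_sub (k := k) h12
  have := R_lt k x1
  have := R_lt k (x1 - x2)
  by_cases hR10 : R k x1 = 0
  · rcases eq_R_or_R_add_le k (x1 - x2) with h | h
    · have hx2 : k + 1 ≤ x2 := by have := eq_R_or_R_add_le k x2; omega
      refine movesToP_second hs (t := k) (by omega) le_rfl (by omega) (by omega) ?_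
      have := R_sub_add (k := k) le_rfl (show k ≤ x1 by omega)
      unfold PCond KNice
      omega
    · refine movesToP_first hs (t := k) (by omega) le_rfl (by omega) ?_
      have := R_sub_add (k := k) le_rfl (show k ≤ x1 by omega)
      unfold PCond KNice
      omega
  · have := R_sub_add (k := k) (x := x1) (t := R k x1 - 1) (by omega)
      (by have := R_le k x1; omega)
    refine movesToP_first hs (t := R k x1 - 1) (by omega) (by omega)
      (by have := R_le k (x1 - x2); omega) ?_
    have := R_lt k (x1 - (R k x1 - 1))
    unfold PCond KNice
    omega

lemma movesToP_of_R_eq_one (hk : 2 ≤ k)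
    (hc : ¬ PCond k x1 x2 x3 (beta (x1 :: x2 :: x3 :: x4 :: l))) (h3 : x3 ≤ 1)
    (hβ : beta (x1 :: x2 :: x3 :: x4 :: l) % 2 = 0) (hR2 : R k x2 = 1) :
    MovesToP k (x1 :: x2 :: x3 :: x4 :: l) := by
  obtain ⟨h12, h23, h34⟩ := pairwise_ge_cons4 hs
  have hR1 : R k x1 ≠ 0 := fun h => hc (Or.inl ⟨h3, hβ, Or.inl ⟨h, hR2⟩⟩)
  have := R_lt k x1
  have := R_sub_add (k := k) (Nat.le_of_lt_succ (R_lt k x1)) (R_le k x1)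
  have := R_lt k (x1 - R k x1)
  by_cases hbig : R k x1 ≤ x1 - x2
  · refine movesToP_first hs (t := R k x1) (by omega) (by omega) (by omega) ?_
    unfold PCond KNice
    omega
  have hx2 : 1 ≤ x2 := by have := R_le k x2; omega
  have hval : x1 - x2 + 1 = R k x1 := by
    have := R_add_R_sub (k := k) h12
    have := R_le k (x1 - x2)
    omega
  by_cases h32 : x3 < x2
  · refine movesToP_second hs (t := R k x1) (by omega) (by omega) (by omega) (by omega) ?_
    rw [show x1 - R k x1 = x2 - 1 by omega]
    have := R_sub_add (k := k) (t := 1) (by omega) hx2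
    have := R_lt k (x2 - 1)
    unfold PCond KNice
    omega
  · have hx4 : x4 = x3 := by
      by_contra h
      have := beta_eq_one_of_lt hs (by omega)
      omega
    refine movesToP_past_third hs (t := x1) (by omega) (by omega) le_rfl (by omega) hx4
      fun β hβ' => ?_
    unfold PCond
    rw [show x2 - x3 = 0 by omega, R_zero]
    omega

lemma movesToP_of_R_sub_eq_zero (hk : 2 ≤ k)
    (hc : ¬ PCond k x1 x2 x3 (beta (x1 :: x2 :: x3 :: x4 :: l))) (h3 : 2 ≤ x3)
    (hβ : beta (x1 :: x2 :: x3 :: x4 :: l) % 2 = 1) (hq : R k (x2 - x3) = 0) :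
    MovesToP k (x1 :: x2 :: x3 :: x4 :: l) := by
  obtain ⟨h12, h23, h34⟩ := pairwise_ge_cons4 hs
  have hp : R k (x1 - x2) ≠ k :=
    fun h => hc (Or.inr (Or.inr (Or.inr ⟨h3, hβ, Or.inl ⟨h, hq⟩⟩)))
  have := R_lt k (x1 - x2)
  rcases eq_R_or_R_add_le k (x1 - x2) with hval | hge
  · by_cases h32 : x3 < x2
    · have := eq_R_or_R_add_le k (x2 - x3)
      refine movesToP_second hs (t := R k (x1 - x2) + 1) (by omega) (by omega) (by omega)
        (by omega) ?_
      unfold PCond KGood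
      rw [show x2 - (x1 - (R k (x1 - x2) + 1)) = 1 by omega,
        show x1 - (R k (x1 - x2) + 1) - x3 = x2 - x3 - 1 by omega]
      have := R_eq_self (k := k) (show 1 ≤ k by omega)
      have := R_sub_add (k := k) (x := x2 - x3) (t := 1) (by omega) (by omega)
      have := R_lt k (x2 - x3 - 1)
      omega
    rcases h34.lt_or_eq with h43 | h43
    · refine movesToP_third hs (t := R k (x1 - x2) + 1) (by omega) (by omega) (by omega)
        (by omega) fun β => ?_
      unfold PCond KNice KGood
      rw [show x3 - (x1 - (R k (x1 - x2) + 1)) = 1 by omega]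
      have := R_eq_self (k := k) (show 1 ≤ k by omega)
      have : x3 = 2 → R k x3 = 2 := fun h => R_eq_self (by omega) |>.trans h
      omega
    · refine movesToP_past_third hs (t := R k (x1 - x2) + 1) (by omega) (by omega) (by omega)
        (by omega) h43 fun β hβ' => ?_
      unfold PCond
      omega
  · refine movesToP_first hs (t := R k (x1 - x2) + 1) (by omega) (by omega) (by omega) ?_
    unfold PCond KGood
    rw [show x1 - (R k (x1 - x2) + 1) - x2 = x1 - x2 - (R k (x1 - x2) + 1) by omega]
    have := R_sub_add (k := k) (x := x1 - x2) (t := R k (x1 - x2) + 1) (by omega) (by omega)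
    have := R_lt k (x1 - x2 - (R k (x1 - x2) + 1))
    omega

lemma movesToP_of_R_sub_eq_k (hk : 2 ≤ k)
    (hc : ¬ PCond k x1 x2 x3 (beta (x1 :: x2 :: x3 :: x4 :: l))) (h3 : 2 ≤ x3)
    (hβ : beta (x1 :: x2 :: x3 :: x4 :: l) % 2 = 1) (hq : R k (x2 - x3) = k) :
    MovesToP k (x1 :: x2 :: x3 :: x4 :: l) := by
  obtain ⟨h12, h23, -⟩ := pairwise_ge_cons4 hs
  have hp : R k (x1 - x2) ≠ 1 :=
    fun h => hc (Or.inr (Or.inr (Or.inr ⟨h3, hβ, Or.inr (Or.inr ⟨h, hq⟩)⟩)))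
  have := R_lt k (x1 - x2)
  have := R_le k (x1 - x2)
  by_cases hp0 : R k (x1 - x2) = 0
  · rcases eq_R_or_R_add_le k (x1 - x2) with h | h
    · have := R_le k (x2 - x3)
      refine movesToP_second hs (t := k) (by omega) le_rfl (by omega) (by omega) ?_
      unfold PCond KGood
      rw [show x2 - (x1 - k) = k by omega, show x1 - k - x3 = x2 - x3 - k by omega]
      have := R_eq_self (le_refl k)
      have := R_sub_add (k := k) (x := x2 - x3) le_rfl (by omega)
      have := R_lt k (x2 - x3 - k)
      omega
    · refine movesToP_first hs (t := k) (by omega) le_rfl (by omega) ?_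
      unfold PCond KGood
      rw [show x1 - k - x2 = x1 - x2 - k by omega]
      have := R_sub_add (k := k) (x := x1 - x2) le_rfl (by omega)
      have := R_lt k (x1 - x2 - k)
      omega
  · refine movesToP_first hs (t := R k (x1 - x2) - 1) (by omega) (by omega) (by omega) ?_
    unfold PCond KGood
    rw [show x1 - (R k (x1 - x2) - 1) - x2 = x1 - x2 - (R k (x1 - x2) - 1) by omega]
    have := R_sub_add (k := k) (x := x1 - x2) (t := R k (x1 - x2) - 1) (by omega) (by omega)
    have := R_lt k (x1 - x2 - (R k (x1 - x2) - 1))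
    omega

end Reach

theorem MiserePCond.movesToP_of_not {k : ℕ} {S : List ℕ} (hk : 2 ≤ k)
    (hs : S.Pairwise (· ≥ ·)) (hlen : 4 ≤ S.length) (hsum : S.sum ≠ 0)
    (hc : ¬ MiserePCond k S) : MovesToP k S := by
  obtain ⟨x1, x2, x3, x4, l, rfl⟩ := exists_eq_cons4 hlen
  have hx1 : 1 ≤ x1 := by
    by_contra! h0
    refine hsum (List.sum_eq_zero fun y hy => ?_)
    rcases List.mem_cons.1 hy with rfl | hy
    · omega
    · have := List.rel_of_pairwise_cons hs hy
      omega
  rw [miserePCond_cons_iff] at hc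
  set β := beta (x1 :: x2 :: x3 :: x4 :: l)
  by_cases hA : x3 ≤ 1 ∧ (β % 2 = 1 ∨ 2 ≤ R k x2) ∨
      2 ≤ x3 ∧ (β % 2 = 0 ∨ 1 ≤ R k (x2 - x3) ∧ R k (x2 - x3) ≤ k - 1)
  · exact movesToP_of_R_sub hs hk hc hA
  have := R_lt k (x2 - x3)
  rcases Nat.lt_or_ge x3 2 with h3 | h3
  · obtain h | h : R k x2 = 0 ∨ R k x2 = 1 := by omega
    · exact movesToP_of_R_eq_zero hs hk hx1 hc (by omega) (by omega) h
    · exact movesToP_of_R_eq_one hs hk hc (by omega) (by omega) h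
  · obtain h | h : R k (x2 - x3) = 0 ∨ R k (x2 - x3) = k := by omega
    · exact movesToP_of_R_sub_eq_zero hs hk hc h3 (by omega) h
    · exact movesToP_of_R_sub_eq_k hs hk hc h3 (by omega) h

lemma MiserePCond.sum_ne_zero {k : ℕ} {S : List ℕ} (hlen : 3 ≤ S.length)
    (hc : MiserePCond k S) : S.sum ≠ 0 := by
  obtain ⟨x1, x2, x3, l, rfl⟩ : ∃ x1 x2 x3 l, S = x1 :: x2 :: x3 :: l := by
    rcases S with _ | ⟨_, _ | ⟨_, _ | ⟨_, _⟩⟩⟩ <;> simp_all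
  intro hsum
  simp only [List.sum_cons] at hsum
  obtain ⟨rfl, rfl, rfl⟩ : x1 = 0 ∧ x2 = 0 ∧ x3 = 0 := by omega
  rw [miserePCond_cons_iff, show beta (0 :: 0 :: 0 :: l) = 0 by simp [beta, heap]] at hc
  unfold PCond KNice at hc
  simp only [Nat.sub_self, R_zero] at hc
  omega

theorem misereBP_iff_of_kernel {k : ℕ} (I C : List ℕ → Prop)
    (hI : ∀ S S', I S → BFollower k S S' → I S')
    (hC : ∀ S, I S → C S → S.sum ≠ 0)
    (hstable : ∀ S S', I S → C S → BFollower k S S' → ¬ C S')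
    (hreach : ∀ S, I S → S.sum ≠ 0 → ¬ C S → ∃ S', BFollower k S S' ∧ C S') :
    ∀ S, I S → (MisereBP k S ↔ C S) := by
  intro S
  induction hn : S.sum using Nat.strong_induction_on generalizing S with
  | _ n ih =>
    intro hS
    have ih' : ∀ S', BFollower k S S' → (MisereBP k S' ↔ C S') := fun S' hf =>
      ih _ (hn ▸ hf.sum_lt) S' rfl (hI S S' hS hf)
    rw [MisereBP]
    constructor
    · rintro ⟨hsum, hall⟩
      by_contra hnot
      obtain ⟨S', hf, hC'⟩ := hreach S hS hsum hnot
      exact hall S' hf ((ih' S' hf).2 hC')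
    · intro hCS
      exact ⟨hC S hS hCS, fun S' hf hP => hstable S S' hS hCS hf ((ih' S' hf).1 hP)⟩

theorem misereBP_iff_miserePCond {k : ℕ} (hk : 2 ≤ k) {S : List ℕ}
    (hs : S.Pairwise (· ≥ ·)) (hlen : 4 ≤ S.length) : MisereBP k S ↔ MiserePCond k S := by
  refine misereBP_iff_of_kernel (fun S => S.Pairwise (· ≥ ·) ∧ 4 ≤ S.length) (MiserePCond k)
    ?_ ?_ ?_ ?_ S ⟨hs, hlen⟩
  · rintro S S' ⟨hs, hlen⟩ hf
    obtain ⟨x1, T, rfl⟩ := List.exists_cons_of_length_pos (by omega : 0 < S.length)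
    obtain ⟨t, -, -, -, rfl⟩ := bFollower_cons_iff.1 hf
    refine ⟨hs.of_cons.orderedInsert _ _, ?_⟩
    simp only [List.orderedInsert_length, List.length_cons] at hlen ⊢
    omega
  · exact fun S ⟨_, hlen⟩ => MiserePCond.sum_ne_zero (by omega)
  · exact fun S S' ⟨hs, hlen⟩ hc hf => MiserePCond.not_of_bFollower hk hs hlen hc hf
  · exact fun S ⟨hs, hlen⟩ hsum hc => MiserePCond.movesToP_of_not hk hs hlen hsum hc

theorem stmt19 (k : ℕ) (hk : 2 ≤ k) (S : List ℕ) (hn : 4 ≤ S.length) (hsorted : S.Pairwise (· ≥ ·))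
    (h3 : 2 ≤ heap S 3) (hb : Odd (beta S))
    (hgood : KGood k (heap S 1) (heap S 2) (heap S 3)) :
    MisereBP k S :=
  (misereBP_iff_miserePCond hk hsorted hn).2 (Or.inr (Or.inr (Or.inr ⟨h3, hb, hgood⟩)))
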